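/- arXiv:2504.11110 — 2 statements merged into one kernel-verified Lean document; each statement's English description precedes it below -/
import Mathlib

section
/- Let α ∈ (0,1). Let x be a random variable uniformly distributed on {0,1}, let y ∈ ℂ be a fixed symbol with |y| = 1, and let h_A ~ CN(0,1) and h_C ~ CN(0,1) be circularly-symmetric complex Gaussians such that x, h_A, h_C are mutually independent. Then E[ |√(1−α)·h_A·x + √α·h_C·y|² ] = (1−α)/2 + α. Moreover, (1/2)·((1−α)/2 + α) + (1/2)·((1/2)·1 + (1/2)·(2−α)) = 1; that is, in the DTRTF scheme the expected received-symbol energy averaged over a paired pair of time-slots (slot k carrying the superposed symbols, and slot n+k carrying the helper's symbol with energy 1 or 2−α each with probability 1/2) equals unity, consistent with the pre-countermeasure value. (Proposition 1(2).) -/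
/-!
Expand `|√(1-α) h_A x + √α h_C y|² = (1-α) x² |h_A|² + α |y|² |h_C|² + 2 Re(c · x h_A conj h_C)`
with `c = √(1-α) √α conj y`. By independence the cross term has mean
`c · E[x] E[h_A] E[conj h_C] = 0`, since `h_A` is centred, and `E[x² |h_A|²] = E[x²] E|h_A|²`.
As `x² = x`, `E x = 1/2` and `E|h|² = 1/2 + 1/2` (the variances of the real and imaginary parts),
the mean energy is `(1-α)/2 + α`; the second claim is arithmetic.
-/

open MeasureTheory ProbabilityTheory

/-- `W` is a circularly-symmetric complex Gaussian random variable with mean `0` and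
variance `σ2` under `μ`. -/
def IsCN {Ω : Type*} [MeasurableSpace Ω] (μ : Measure Ω) (W : Ω → ℂ) (σ2 : ℝ) : Prop :=
  IndepFun (fun ω => (W ω).re) (fun ω => (W ω).im) μ ∧
  μ.map (fun ω => (W ω).re) = gaussianReal 0 (σ2 / 2).toNNReal ∧
  μ.map (fun ω => (W ω).im) = gaussianReal 0 (σ2 / 2).toNNReal

section

open ComplexConjugate

variable {Ω : Type*} [MeasurableSpace Ω] {μ : Measure Ω}

lemma hasLaw_of_map_eq {𝓧 : Type*} [MeasurableSpace 𝓧] {X : Ω → 𝓧} {ν : Measure 𝓧}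
    (h : μ.map X = ν) (hν : ν ≠ 0) : HasLaw X ν μ :=
  ⟨.of_map_ne_zero (h ▸ hν), h⟩

namespace ProbabilityTheory.HasLaw

variable {W : Ω → ℝ} {m : ℝ} {v : NNReal}

lemma integral_eq_of_gaussianReal (hW : HasLaw W (gaussianReal m v) μ) : μ[W] = m := by
  rw [hW.integral_eq, integral_id_gaussianReal]

lemma integral_sq_of_gaussianReal (hW : HasLaw W (gaussianReal 0 v) μ) :
    ∫ ω, W ω ^ 2 ∂μ = v := by
  rw [← variance_of_integral_eq_zero hW.aemeasurable hW.integral_eq_of_gaussianReal,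
    hW.variance_eq, variance_id_gaussianReal]

lemma integral_eq_of_two_point {X : Ω → ℝ} {p q : ENNReal} {a b : ℝ} (hp : p ≠ ⊤) (hq : q ≠ ⊤)
    (hX : HasLaw X (p • Measure.dirac a + q • Measure.dirac b) μ) :
    μ[X] = p.toReal * a + q.toReal * b := by
  rw [hX.integral_eq, integral_add_measure ((integrable_dirac (by simp)).smul_measure hp)
    ((integrable_dirac (by simp)).smul_measure hq), integral_smul_measure, integral_smul_measure,
    integral_dirac, integral_dirac, smul_eq_mul, smul_eq_mul]

end ProbabilityTheory.HasLaw

namespace IsCN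

variable {W : Ω → ℂ} {σ2 : ℝ}

lemma hasLaw_re (h : IsCN μ W σ2) :
    HasLaw (fun ω => (W ω).re) (gaussianReal 0 (σ2 / 2).toNNReal) μ :=
  hasLaw_of_map_eq h.2.1 (IsProbabilityMeasure.ne_zero _)

lemma hasLaw_im (h : IsCN μ W σ2) :
    HasLaw (fun ω => (W ω).im) (gaussianReal 0 (σ2 / 2).toNNReal) μ :=
  hasLaw_of_map_eq h.2.2 (IsProbabilityMeasure.ne_zero _)

lemma memLp_two (h : IsCN μ W σ2) : MemLp W 2 μ :=
  memLp_re_im_iff.mp ⟨h.hasLaw_re.hasGaussianLaw.memLp_two, h.hasLaw_im.hasGaussianLaw.memLp_two⟩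

lemma integral_eq_zero (h : IsCN μ W σ2) : μ[W] = 0 := by
  have := h.hasLaw_re.isProbabilityMeasure
  have hint := h.memLp_two.integrable one_le_two
  apply Complex.ext
  · rw [Complex.zero_re, ← RCLike.re_to_complex, ← integral_re hint]
    exact h.hasLaw_re.integral_eq_of_gaussianReal
  · rw [Complex.zero_im, ← RCLike.im_to_complex, ← integral_im hint]
    exact h.hasLaw_im.integral_eq_of_gaussianReal

lemma integral_sq_norm (h : IsCN μ W σ2) (hσ : 0 ≤ σ2) : ∫ ω, ‖W ω‖ ^ 2 ∂μ = σ2 := by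
  have hre := h.hasLaw_re
  have him := h.hasLaw_im
  simp_rw [Complex.sq_norm, Complex.normSq_apply, ← sq]
  rw [integral_add hre.hasGaussianLaw.memLp_two.integrable_sq
    him.hasGaussianLaw.memLp_two.integrable_sq, hre.integral_sq_of_gaussianReal,
    him.integral_sq_of_gaussianReal, Real.coe_toNNReal _ (by linarith)]
  ring

end IsCN

lemma Complex.sq_norm_mul_add (x u v : ℂ) :
    ‖x * u + v‖ ^ 2 = ‖x‖ ^ 2 * ‖u‖ ^ 2 + ‖v‖ ^ 2 + 2 * (x * u * conj v).re := by
  simp only [Complex.sq_norm, Complex.normSq_add, Complex.normSq_mul]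

lemma integral_sq_norm_mul_add_of_iIndepFun {X U V : Ω → ℂ} (hX : MemLp X 2 μ)
    (hU : MemLp U 2 μ) (hV : MemLp V 2 μ) (hind : iIndepFun ![X, U, V] μ) (hU0 : μ[U] = 0) :
    ∫ ω, ‖X ω * U ω + V ω‖ ^ 2 ∂μ
      = (∫ ω, ‖X ω‖ ^ 2 ∂μ) * (∫ ω, ‖U ω‖ ^ 2 ∂μ) + ∫ ω, ‖V ω‖ ^ 2 ∂μ := by
  have hXU : IndepFun (fun ω => ‖X ω‖ ^ 2) (fun ω => ‖U ω‖ ^ 2) μ :=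
    (hind.indepFun (i := 0) (j := 1) (by decide)).comp (φ := fun z : ℂ => ‖z‖ ^ 2)
      (ψ := fun z : ℂ => ‖z‖ ^ 2) (by fun_prop) (by fun_prop)
  have iX := hX.integrable_norm_pow two_ne_zero
  have iU := hU.integrable_norm_pow two_ne_zero
  have iXU : Integrable (fun ω => ‖X ω‖ ^ 2 * ‖U ω‖ ^ 2) μ := hXU.integrable_mul iX iU
  have iV := hV.integrable_norm_pow two_ne_zero
  have hcross : ∫ ω, X ω * U ω * conj (V ω) ∂μ = 0 := by
    have := (hind.comp ![id, id, conj] (fun i => by fin_cases i <;> simp <;> fun_prop)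
      ).integral_fun_prod_eq_prod_integral (fun i => by
        fin_cases i
        exacts [hX.1, hU.1, hV.1.star])
    simpa [Fin.prod_univ_three, hU0, mul_assoc] using this
  have icross : Integrable (fun ω => X ω * U ω * conj (V ω)) μ := by
    refine (iXU.add iV).mono' ((hX.1.mul hU.1).mul hV.1.star) (ae_of_all _ fun ω => ?_)
    have := two_mul_le_add_sq (‖X ω‖ * ‖U ω‖) ‖V ω‖
    simp only [Pi.add_apply, norm_mul, Complex.norm_conj]
    nlinarith [norm_nonneg (X ω), norm_nonneg (U ω), norm_nonneg (V ω)]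
  have iSum : Integrable (fun ω => ‖X ω‖ ^ 2 * ‖U ω‖ ^ 2 + ‖V ω‖ ^ 2) μ := iXU.add iV
  have iRe : Integrable (fun ω => 2 * (X ω * U ω * conj (V ω)).re) μ := icross.re.const_mul 2
  simp_rw [Complex.sq_norm_mul_add]
  rw [integral_add iSum iRe, integral_add iXU iV,
    hXU.integral_fun_mul_eq_mul_integral iX.1 iU.1, integral_const_mul,
    show ∫ ω, (X ω * U ω * conj (V ω)).re ∂μ = (∫ ω, X ω * U ω * conj (V ω) ∂μ).re
      from integral_re icross, hcross, Complex.zero_re, mul_zero, add_zero]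

end

theorem dtrtf_average_energy_unity_general
    {Ω : Type*} [MeasurableSpace Ω] (μ : Measure Ω) [IsProbabilityMeasure μ]
    (α : ℝ) (hα : α ∈ Set.Ioo (0 : ℝ) 1)
    (x : Ω → ℝ) (hx01 : ∀ ω, x ω = 0 ∨ x ω = 1)
    (hxunif : μ.map x = (1 / 2 : ENNReal) • Measure.dirac (0 : ℝ)
        + (1 / 2 : ENNReal) • Measure.dirac (1 : ℝ))
    (y : ℂ) (hy : ‖y‖ = 1)
    (hA hC : Ω → ℂ)
    (hACN : IsCN μ hA 1) (hCCN : IsCN μ hC 1)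
    (hindep : iIndepFun
      ![fun ω => ((x ω : ℝ) : ℂ), hA, hC] μ) :
    (∫ ω, (‖(Real.sqrt (1 - α) : ℂ) * hA ω * (x ω : ℂ)
        + (Real.sqrt α : ℂ) * hC ω * y‖) ^ 2 ∂μ) = (1 - α) / 2 + α ∧
    (1 / 2 : ℝ) * ((1 - α) / 2 + α)
      + (1 / 2) * ((1 / 2) * 1 + (1 / 2) * (2 - α)) = 1 := by
  refine ⟨?_, by ring⟩
  set a := Real.sqrt (1 - α)
  set b := Real.sqrt α
  have hxlaw := hasLaw_of_map_eq hxunif fun h => by simpa using congrArg (· Set.univ) h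
  have hx_sq (ω : Ω) : ‖(x ω : ℂ)‖ ^ 2 = x ω := by rcases hx01 ω with h | h <;> simp [h]
  have hX : MemLp (fun ω => (x ω : ℂ)) 2 μ :=
    .of_bound (Complex.measurable_ofReal.comp_aemeasurable hxlaw.aemeasurable).aestronglyMeasurable
      1 (ae_of_all _ fun ω => by rcases hx01 ω with h | h <;> simp [h])
  have hind : iIndepFun ![fun ω => (x ω : ℂ), fun ω => a * hA ω, fun ω => b * hC ω * y] μ := by
    convert hindep.comp ![id, (a * ·), (b * · * y)]
      (fun i => by fin_cases i <;> simp <;> fun_prop) using 1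
    ext i ω
    fin_cases i <;> rfl
  have ha : ‖(a : ℂ)‖ ^ 2 = 1 - α := by
    simp [a, Real.sq_sqrt (sub_nonneg.mpr hα.2.le)]
  have hb : ‖(b : ℂ)‖ ^ 2 = α := by simp [b, Real.sq_sqrt hα.1.le]
  simp_rw [mul_comm _ (x _ : ℂ)]
  rw [integral_sq_norm_mul_add_of_iIndepFun hX (hACN.memLp_two.const_mul _)
    ((hCCN.memLp_two.const_mul _).mul_const _) hind
    (by rw [integral_const_mul, hACN.integral_eq_zero, mul_zero])]
  simp only [hx_sq, norm_mul, mul_pow, hy, ha, hb, mul_one]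
  rw [integral_const_mul, integral_const_mul, hACN.integral_sq_norm zero_le_one,
    hCCN.integral_sq_norm zero_le_one, hxlaw.integral_eq_of_two_point (by simp) (by simp)]
  norm_num
  ring

/-- Proposition 1(2): the expected received-symbol energy in the first slot
of the DTRTF scheme is `(1−α)/2 + α`, and averaged over a pair of time-slots the expected
energy equals unity. -/
theorem dtrtf_average_energy_unity
    {Ω : Type*} [MeasurableSpace Ω] (μ : Measure Ω) [IsProbabilityMeasure μ]
    (α : ℝ) (hα : α ∈ Set.Ioo (0 : ℝ) 1)
    (x : Ω → ℝ) (hx : Measurable x) (hx01 : ∀ ω, x ω = 0 ∨ x ω = 1)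
    (hxunif : μ.map x = (1 / 2 : ENNReal) • Measure.dirac (0 : ℝ)
        + (1 / 2 : ENNReal) • Measure.dirac (1 : ℝ))
    (y : ℂ) (hy : ‖y‖ = 1)
    (hA hC : Ω → ℂ) (hhA : Measurable hA) (hhC : Measurable hC)
    (hACN : IsCN μ hA 1) (hCCN : IsCN μ hC 1)
    (hindep : iIndepFun
      ![fun ω => ((x ω : ℝ) : ℂ), hA, hC] μ) :
    (∫ ω, (‖(Real.sqrt (1 - α) : ℂ) * hA ω * (x ω : ℂ)
        + (Real.sqrt α : ℂ) * hC ω * y‖) ^ 2 ∂μ) = (1 - α) / 2 + α ∧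
    (1 / 2 : ℝ) * ((1 - α) / 2 + α)
      + (1 / 2) * ((1 / 2) * 1 + (1 / 2) * (2 - α)) = 1 :=
  dtrtf_average_energy_unity_general μ α hα x hx01 hxunif y hy hA hC hACN hCCN hindep
end

section
/- Let α ∈ (0,1), let M ≥ 1 be a natural number, let N > 0, and let h ∈ ℂ with h ≠ 0. Let W ~ CN(0,N), i.e., Re W and Im W are independent real Gaussians with mean 0 and variance N/2. Set d = √(3 − α − 2·√(2−α)·cos(π/M)). Then ℙ( |h·(√(2−α)·e^{iπ/M} − 1) + W|² ≤ |W|² ) = Q( |h|·d / √(2N) ), where Q is the Gaussian Q-function. (This is the closed form P_{B1} = P_{B2} = P_{B3} = Q(|h| d / √(2N)) of Proposition 3, the pairwise error probability between the helper's modified and unmodified M-PSK symbols under complex Gaussian noise of variance N and channel gain h.) -/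
open MeasureTheory ProbabilityTheory

/-- The Gaussian Q-function: `Q x = ℙ(G > x)` for a standard real Gaussian `G`. -/
noncomputable def gaussQ (x : ℝ) : ENNReal := gaussianReal 0 1 (Set.Ioi x)

/-! With `s = h (√(2−α) e^{iπ/M} − 1)`, expanding `‖s + W‖²` turns the event into the half-plane
`⟪s, W⟫ ≤ −‖s‖²/2`. For circularly-symmetric noise, `⟪s, W⟫ = Re s · Re W + Im s · Im W` is a
real Gaussian of variance `‖s‖² N/2`, so the probability is
`Q((‖s‖²/2) / (‖s‖ √(N/2))) = Q(‖s‖/√(2N))`, and `‖s‖ = ‖h‖ d` by the law of cosines. -/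

open scoped NNReal

lemma norm_add_sq_le_norm_sq_iff {F : Type*} [NormedAddCommGroup F] [InnerProductSpace ℝ F]
    (x y : F) : ‖x + y‖ ^ 2 ≤ ‖y‖ ^ 2 ↔ inner ℝ x y ≤ -(‖x‖ ^ 2 / 2) := by
  rw [norm_add_sq_real]
  constructor <;> intro h <;> linarith

lemma Complex.norm_ofReal_mul_exp_sub_one (r θ : ℝ) :
    ‖(r : ℂ) * Complex.exp (θ * Complex.I) - 1‖ = √(r ^ 2 + 1 - 2 * r * Real.cos θ) := by
  rw [Complex.norm_def, Complex.normSq_apply]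
  congr 1
  simp only [sub_re, mul_re, ofReal_re, exp_ofReal_mul_I_re, ofReal_im, exp_ofReal_mul_I_im,
    zero_mul, sub_zero, one_re, sub_im, mul_im, add_zero, one_im]
  linear_combination r ^ 2 * Real.sin_sq_add_cos_sq θ

lemma Complex.ofReal_mul_exp_sub_one_ne_zero {r : ℝ} (hr : |r| ≠ 1) (θ : ℝ) :
    (r : ℂ) * Complex.exp (θ * Complex.I) - 1 ≠ 0 := by
  intro h
  apply hr
  simpa [Complex.norm_exp_ofReal_mul_I] using congrArg (‖·‖) (sub_eq_zero.mp h)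

section Gaussian

variable {Ω : Type*} [MeasurableSpace Ω] {μ : Measure Ω}

lemma ProbabilityTheory.IndepFun.map_mul_add_mul_eq_gaussianReal {X Y : Ω → ℝ} (hX : Measurable X)
    (hY : Measurable Y) (hXY : IndepFun X Y μ) {v : ℝ≥0}
    (hXv : μ.map X = gaussianReal 0 v) (hYv : μ.map Y = gaussianReal 0 v) (a b : ℝ) :
    μ.map (fun ω => a * X ω + b * Y ω) = gaussianReal 0 ((a ^ 2 + b ^ 2).toNNReal * v) := by
  have hscale {Z : Ω → ℝ} (hZ : Measurable Z) (hZv : μ.map Z = gaussianReal 0 v) (c : ℝ) :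
      μ.map (fun ω => c * Z ω) = gaussianReal 0 (.mk (c ^ 2) (sq_nonneg c) * v) := by
    change μ.map ((c * ·) ∘ Z) = _
    rw [← Measure.map_map (measurable_const_mul c) hZ, hZv, gaussianReal_map_const_mul, mul_zero]
  have hsum := gaussianReal_add_gaussianReal_of_indepFun
    (hXY.comp (measurable_const_mul a) (measurable_const_mul b)) (hscale hX hXv a) (hscale hY hYv b)
  refine hsum.trans ?_
  rw [add_zero]
  congr 1
  ext
  simp only [NNReal.coe_add, NNReal.coe_mul, NNReal.coe_mk,
    Real.coe_toNNReal _ (by positivity : 0 ≤ a ^ 2 + b ^ 2)]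
  ring

lemma IsCN.map_inner {W : Ω → ℂ} {σ2 : ℝ} (hW : Measurable W) (hCN : IsCN μ W σ2) (s : ℂ) :
    μ.map (fun ω => inner ℝ s (W ω)) = gaussianReal 0 (‖s‖ ^ 2 * (σ2 / 2)).toNNReal := by
  obtain ⟨hindep, hre, him⟩ := hCN
  have hinner : (fun ω => inner ℝ s (W ω)) = fun ω => s.re * (W ω).re + s.im * (W ω).im := by
    ext ω
    simp only [Complex.inner, Complex.mul_re, Complex.conj_re, Complex.conj_im, mul_neg,
      sub_neg_eq_add]
    ring
  rw [hinner, hindep.map_mul_add_mul_eq_gaussianReal (by fun_prop) (by fun_prop) hre him,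
    ← Real.toNNReal_mul (by positivity), Complex.sq_norm, Complex.normSq_apply]
  ring_nf

lemma gaussianReal_Iic_eq_gaussQ {v : ℝ≥0} (hv : v ≠ 0) (c : ℝ) :
    gaussianReal 0 v (Set.Iic c) = gaussQ (-c / √v) := by
  have hσ : 0 < √(v : ℝ) := Real.sqrt_pos.mpr (by positivity)
  have hlaw : (gaussianReal 0 1).map (fun x => -√v * x) = gaussianReal 0 v := by
    rw [gaussianReal_map_const_mul, mul_zero]
    congr 1
    ext
    simp
  have hpre : (fun x => -√v * x) ⁻¹' Set.Iic c = Set.Ici (-c / √v) := by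
    ext x
    simp only [neg_mul, Set.mem_preimage, Set.mem_Iic, Set.mem_Ici, div_le_iff₀ hσ]
    constructor <;> intro h <;> linarith
  rw [← hlaw, Measure.map_apply (measurable_const_mul _) measurableSet_Iic, hpre, gaussQ]
  exact measure_congr (Ioi_ae_eq_Ici' ((gaussianReal_absolutelyContinuous 0 one_ne_zero)
    Real.volume_singleton)).symm

end Gaussian

theorem dtrtf_PB_eq_gaussQ_general
    {Ω : Type*} [MeasurableSpace Ω] (μ : Measure Ω)
    (α : ℝ) (hα : α ∈ Set.Ioo (0 : ℝ) 1) (M : ℕ)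
    (N : ℝ) (hN : 0 < N) (h : ℂ) (hh : h ≠ 0)
    (W : Ω → ℂ) (hW : Measurable W) (hWCN : IsCN μ W N)
    (d : ℝ) (hd : d = Real.sqrt (3 - α - 2 * Real.sqrt (2 - α) * Real.cos (Real.pi / M))) :
    μ {ω | (‖(h * ((Real.sqrt (2 - α) : ℂ)
          * Complex.exp ((Real.pi / M : ℝ) * Complex.I) - 1) + W ω)‖) ^ 2
        ≤ (‖W ω‖) ^ 2}
      = gaussQ (‖h‖ * d / Real.sqrt (2 * N)) := by
  set s := h * ((Real.sqrt (2 - α) : ℂ) * Complex.exp ((Real.pi / M : ℝ) * Complex.I) - 1)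
  have hs_norm : ‖s‖ = ‖h‖ * d := by
    rw [norm_mul, Complex.norm_ofReal_mul_exp_sub_one, Real.sq_sqrt (by linarith [hα.2]), hd]
    ring_nf
  have hs_pos : 0 < ‖s‖ := by
    refine norm_pos_iff.mpr <| mul_ne_zero hh (Complex.ofReal_mul_exp_sub_one_ne_zero ?_ _)
    rw [abs_of_nonneg (Real.sqrt_nonneg _), Ne, Real.sqrt_eq_one]
    linarith [hα.2]
  simp_rw [norm_add_sq_le_norm_sq_iff]
  change μ ((fun ω => inner ℝ s (W ω)) ⁻¹' Set.Iic (-(‖s‖ ^ 2 / 2))) = _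
  rw [← Measure.map_apply (by fun_prop) measurableSet_Iic, hWCN.map_inner hW,
    gaussianReal_Iic_eq_gaussQ (Real.toNNReal_pos.mpr (by positivity)).ne']
  rw [← hs_norm, Real.coe_toNNReal _ (by positivity), Real.sqrt_mul (by positivity),
    Real.sqrt_sq hs_pos.le, show 2 * N = 2 ^ 2 * (N / 2) by ring, Real.sqrt_mul (by norm_num),
    Real.sqrt_sq zero_le_two]
  field_simp

/-- Proposition 3: the pairwise error probability between the helper's
modified and unmodified M-PSK symbols under complex Gaussian noise of variance `N` and
channel gain `h` is `Q(|h| d / √(2N))` with `d = √(3 − α − 2 √(2−α) cos(π/M))`. -/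
theorem dtrtf_PB_eq_gaussQ
    {Ω : Type*} [MeasurableSpace Ω] (μ : Measure Ω) [IsProbabilityMeasure μ]
    (α : ℝ) (hα : α ∈ Set.Ioo (0 : ℝ) 1) (M : ℕ) (hM : 1 ≤ M)
    (N : ℝ) (hN : 0 < N) (h : ℂ) (hh : h ≠ 0)
    (W : Ω → ℂ) (hW : Measurable W) (hWCN : IsCN μ W N)
    (d : ℝ) (hd : d = Real.sqrt (3 - α - 2 * Real.sqrt (2 - α) * Real.cos (Real.pi / M))) :
    μ {ω | (‖(h * ((Real.sqrt (2 - α) : ℂ)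
          * Complex.exp ((Real.pi / M : ℝ) * Complex.I) - 1) + W ω)‖) ^ 2
        ≤ (‖W ω‖) ^ 2}
      = gaussQ (‖h‖ * d / Real.sqrt (2 * N)) :=
  dtrtf_PB_eq_gaussQ_general μ α hα M N hN h hh W hW hWCN d hd
end
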